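/- For all integers 0 ≤ j ≤ n, the polynomial identity q_j(n − 2x) = K_j(x) holds, i.e., the polynomial obtained by substituting n − 2x into q_j equals the Krawtchouk polynomial K_j as polynomials in x with rational coefficients. -/
import Mathlib


/-- The generalized binomial coefficient `C(y, i)` as a polynomial in `y`
with rational coefficients. -/
noncomputable def binomPoly (i : ℕ) : Polynomial ℚ :=
  Polynomial.C (1 / (i.factorial : ℚ)) * descPochhammer ℚ i

/-- The binary Krawtchouk polynomial `K_j` with parameter `n`. -/
noncomputable def krawPoly (n j : ℕ) : Polynomial ℚ :=
  ∑ i ∈ Finset.range (j + 1),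
    Polynomial.C ((-1 : ℚ) ^ i) * binomPoly i *
      (binomPoly (j - i)).comp (Polynomial.C (n : ℚ) - Polynomial.X)

open Polynomial Finset

/-- `Bp n k = C(n - x, k)` as a polynomial. -/
noncomputable def Bp (n k : ℕ) : Polynomial ℚ :=
  (binomPoly k).comp (Polynomial.C (n : ℚ) - Polynomial.X)

lemma kraw_eq (n j : ℕ) : krawPoly n j =
    ∑ i ∈ Finset.range (j + 1), Polynomial.C ((-1 : ℚ) ^ i) * binomPoly i * Bp n (j - i) :=
  rfl

lemma binomPoly_succ (i : ℕ) :
    Polynomial.C ((i : ℚ) + 1) * binomPoly (i + 1) = (X - Polynomial.C (i : ℚ)) * binomPoly i := by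
  unfold binomPoly
  rw [descPochhammer_succ_right]
  have hfac : ((i : ℚ) + 1) * (1 / ((i + 1).factorial : ℚ)) = 1 / (i.factorial : ℚ) := by
    rw [Nat.factorial_succ]
    push_cast
    have h1 : (i : ℚ) + 1 ≠ 0 := by positivity
    have h2 : (i.factorial : ℚ) ≠ 0 := by positivity
    field_simp
  have hC : Polynomial.C ((i : ℚ) + 1) * Polynomial.C (1 / ((i + 1).factorial : ℚ)) =
      Polynomial.C (1 / (i.factorial : ℚ)) := by
    rw [← Polynomial.C_mul, hfac]
  have hcast : ((i : ℚ[X])) = Polynomial.C (i : ℚ) := by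
    simp
  rw [hcast]
  calc Polynomial.C ((i : ℚ) + 1) *
        (Polynomial.C (1 / ((i + 1).factorial : ℚ)) * (descPochhammer ℚ i * (X - Polynomial.C (i : ℚ))))
      = (Polynomial.C ((i : ℚ) + 1) * Polynomial.C (1 / ((i + 1).factorial : ℚ))) *
        (descPochhammer ℚ i * (X - Polynomial.C (i : ℚ))) := by ring
    _ = _ := by rw [hC]; ring

lemma Bp_succ (n k : ℕ) :
    Polynomial.C ((k : ℚ) + 1) * Bp n (k + 1) =
      (Polynomial.C (n : ℚ) - X - Polynomial.C (k : ℚ)) * Bp n k := by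
  have h := congrArg (Polynomial.comp · (Polynomial.C (n : ℚ) - X)) (binomPoly_succ k)
  simp only [Polynomial.mul_comp, Polynomial.sub_comp, Polynomial.X_comp, Polynomial.C_comp] at h
  unfold Bp
  linear_combination h

/-- First sum: `∑ i * T i` reindexed. -/
lemma sumA (n j : ℕ) :
    (∑ i ∈ range (j + 2), Polynomial.C ((i : ℚ)) *
        (Polynomial.C ((-1 : ℚ) ^ i) * binomPoly i * Bp n (j + 1 - i))) =
    ∑ i ∈ range (j + 1),
        -(Polynomial.C ((-1 : ℚ) ^ i) * ((X - Polynomial.C (i : ℚ)) * binomPoly i) * Bp n (j - i)) := by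
  rw [Finset.sum_range_succ']
  simp only [Nat.cast_zero, map_zero, zero_mul, add_zero]
  refine Finset.sum_congr rfl fun i _ => ?_
  have hb := binomPoly_succ i
  have hidx : j + 1 - (i + 1) = j - i := by omega
  rw [hidx]
  have hpow : Polynomial.C ((-1 : ℚ) ^ (i + 1)) = -Polynomial.C ((-1 : ℚ) ^ i) := by
    rw [pow_succ]; simp
  rw [hpow]
  push_cast
  linear_combination (-Polynomial.C ((-1 : ℚ) ^ i) * Bp n (j - i)) * hb

/-- Second sum: `∑ (j+1-i) * T i` reindexed. -/
lemma sumB (n j : ℕ) :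
    (∑ i ∈ range (j + 2), Polynomial.C ((j : ℚ) + 1 - (i : ℚ)) *
        (Polynomial.C ((-1 : ℚ) ^ i) * binomPoly i * Bp n (j + 1 - i))) =
    ∑ i ∈ range (j + 1),
        Polynomial.C ((-1 : ℚ) ^ i) * binomPoly i *
          ((Polynomial.C (n : ℚ) - X - Polynomial.C ((j : ℚ) - (i : ℚ))) * Bp n (j - i)) := by
  rw [Finset.sum_range_succ]
  have hz : ((j : ℚ) + 1 - ((j + 1 : ℕ) : ℚ)) = 0 := by push_cast; ring
  rw [hz]
  simp only [map_zero, zero_mul, add_zero]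
  refine Finset.sum_congr rfl fun i hi => ?_
  have hi' : i ≤ j := by simpa [Nat.lt_succ_iff] using hi
  have hidx : j + 1 - i = (j - i) + 1 := by omega
  rw [hidx]
  have hB := Bp_succ n (j - i)
  have hcast : ((j - i : ℕ) : ℚ) = (j : ℚ) - (i : ℚ) := by
    rw [Nat.cast_sub hi']
  rw [hcast] at hB
  have hcoef : Polynomial.C ((j : ℚ) + 1 - (i : ℚ)) =
      Polynomial.C (((j : ℚ) - (i : ℚ)) + 1) := by ring_nf
  rw [hcoef]
  linear_combination (Polynomial.C ((-1 : ℚ) ^ i) * binomPoly i) * hB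

/-- The three-term recurrence for Krawtchouk polynomials. -/
lemma kraw_rec (n m : ℕ) :
    Polynomial.C (((m + 1 : ℕ) : ℚ) + 1) * krawPoly n (m + 2) =
      (Polynomial.C (n : ℚ) - 2 * X) * krawPoly n (m + 1) -
      Polynomial.C ((n : ℚ) - ((m + 1 : ℕ) : ℚ) + 1) * krawPoly n m := by
  -- Step 1: C(j+1) K_{j+1} = (Cn - 2X) K_j + S j,  for j = m+1
  have step : ∀ j : ℕ, Polynomial.C ((j : ℚ) + 1) * krawPoly n (j + 1) =
      (Polynomial.C (n : ℚ) - 2 * X) * krawPoly n j +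
      ∑ i ∈ range (j + 1), Polynomial.C (2 * (i : ℚ) - (j : ℚ)) *
        (Polynomial.C ((-1 : ℚ) ^ i) * binomPoly i * Bp n (j - i)) := by
    intro j
    rw [kraw_eq, Finset.mul_sum]
    have hsplit : ∀ i ∈ range (j + 2),
        Polynomial.C ((j : ℚ) + 1) * (Polynomial.C ((-1 : ℚ) ^ i) * binomPoly i * Bp n (j + 1 - i)) =
        Polynomial.C ((i : ℚ)) * (Polynomial.C ((-1 : ℚ) ^ i) * binomPoly i * Bp n (j + 1 - i)) +
        Polynomial.C ((j : ℚ) + 1 - (i : ℚ)) *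
          (Polynomial.C ((-1 : ℚ) ^ i) * binomPoly i * Bp n (j + 1 - i)) := by
      intro i _
      have : Polynomial.C ((j : ℚ) + 1) =
          Polynomial.C ((i : ℚ)) + Polynomial.C ((j : ℚ) + 1 - (i : ℚ)) := by
        rw [← Polynomial.C_add]; ring_nf
      rw [this]; ring
    rw [Finset.sum_congr rfl hsplit, Finset.sum_add_distrib, sumA, sumB, kraw_eq, Finset.mul_sum,
      ← Finset.sum_add_distrib, ← Finset.sum_add_distrib]
    refine Finset.sum_congr rfl fun i _ => ?_
    have : Polynomial.C (2 * (i : ℚ) - (j : ℚ)) =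
        Polynomial.C (i : ℚ) + Polynomial.C (i : ℚ) - Polynomial.C (j : ℚ) := by
      rw [← Polynomial.C_add, ← Polynomial.C_sub]; ring_nf
    rw [this]
    have hCji : Polynomial.C ((j:ℚ) - (i:ℚ)) = Polynomial.C (j:ℚ) - Polynomial.C (i:ℚ) := by
      rw [← Polynomial.C_sub]
    rw [hCji]
    ring
  -- Step 2: S (m+1) = (C m - C n) * K m
  have step2 : (∑ i ∈ range (m + 2), Polynomial.C (2 * (i : ℚ) - ((m + 1 : ℕ) : ℚ)) *
        (Polynomial.C ((-1 : ℚ) ^ i) * binomPoly i * Bp n (m + 1 - i))) =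
      (Polynomial.C ((m : ℚ)) - Polynomial.C ((n : ℚ))) * krawPoly n m := by
    have hsplit : ∀ i ∈ range (m + 2),
        Polynomial.C (2 * (i : ℚ) - ((m + 1 : ℕ) : ℚ)) *
          (Polynomial.C ((-1 : ℚ) ^ i) * binomPoly i * Bp n (m + 1 - i)) =
        Polynomial.C ((i : ℚ)) * (Polynomial.C ((-1 : ℚ) ^ i) * binomPoly i * Bp n (m + 1 - i)) -
        Polynomial.C ((m : ℚ) + 1 - (i : ℚ)) *
          (Polynomial.C ((-1 : ℚ) ^ i) * binomPoly i * Bp n (m + 1 - i)) := by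
      intro i _
      have : Polynomial.C (2 * (i : ℚ) - ((m + 1 : ℕ) : ℚ)) =
          Polynomial.C ((i : ℚ)) - Polynomial.C ((m : ℚ) + 1 - (i : ℚ)) := by
        rw [← Polynomial.C_sub]; push_cast; ring_nf
      rw [this]; ring
    rw [Finset.sum_congr rfl hsplit, Finset.sum_sub_distrib, sumA n m, sumB n m, kraw_eq,
      Finset.mul_sum, ← Finset.sum_sub_distrib]
    refine Finset.sum_congr rfl fun i _ => ?_
    have hCji : Polynomial.C ((m:ℚ) - (i:ℚ)) = Polynomial.C (m:ℚ) - Polynomial.C (i:ℚ) := by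
      rw [← Polynomial.C_sub]
    rw [hCji]
    ring
  have h1 := step (m + 1)
  push_cast at h1 step2 ⊢
  rw [h1, step2]
  have hC : Polynomial.C ((n : ℚ) - ((m : ℚ) + 1) + 1) =
      Polynomial.C (n : ℚ) - Polynomial.C (m : ℚ) := by
    rw [← Polynomial.C_sub]; ring_nf
  rw [hC]
  ring

/-- `q_j(n - 2x) = K_j(x)` as polynomials over `ℚ`. -/
theorem q_comp_eq_kraw (n : ℕ) (hn : 1 ≤ n) (q : ℕ → Polynomial ℚ)
    (hq0 : q 0 = 1) (hq1 : q 1 = Polynomial.X)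
    (hrec : ∀ j : ℕ, 1 ≤ j → j ≤ n - 1 →
      Polynomial.X * q j =
        Polynomial.C ((j : ℚ) + 1) * q (j + 1) +
        Polynomial.C ((n : ℚ) - (j : ℚ) + 1) * q (j - 1)) :
    ∀ j : ℕ, j ≤ n →
      (q j).comp (Polynomial.C (n : ℚ) - 2 * Polynomial.X) = krawPoly n j := by
  intro j
  induction j using Nat.strong_induction_on with
  | _ j ih =>
    intro hjn
    match j with
    | 0 =>
      simp [hq0, krawPoly, binomPoly, descPochhammer_zero]
    | 1 =>
      rw [hq1]
      simp only [X_comp]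
      rw [krawPoly]
      simp [binomPoly, descPochhammer_zero, descPochhammer_one, Finset.sum_range_succ]
      ring
    | (m + 2) =>
      have hr := hrec (m + 1) (by omega) (by omega)
      have hcomp := congrArg (Polynomial.comp · (Polynomial.C (n : ℚ) - 2 * Polynomial.X)) hr
      simp only [Polynomial.mul_comp, Polynomial.add_comp, Polynomial.C_comp,
        Polynomial.X_comp, Nat.add_sub_cancel] at hcomp
      rw [ih (m + 1) (by omega) (by omega), ih m (by omega) (by omega)] at hcomp
      have hK := kraw_rec n m
      have hne : Polynomial.C (((m + 1 : ℕ) : ℚ) + 1) ≠ 0 := by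
        simp only [ne_eq, Polynomial.C_eq_zero]
        push_cast
        positivity
      apply mul_left_cancel₀ hne
      push_cast at hcomp hK ⊢
      replace hcomp : (Polynomial.C (n:ℚ) - 2 * Polynomial.X) * krawPoly n (m + 1) =
          Polynomial.C ((m:ℚ) + 1 + 1) * (q (m + 2)).comp (Polynomial.C (n:ℚ) - 2 * Polynomial.X) +
          Polynomial.C ((n:ℚ) - ((m:ℚ) + 1) + 1) * krawPoly n m := hcomp
      rw [hK]
      linear_combination -hcomp
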